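/- arXiv:2009.13093 — 3 statements merged into one kernel-verified Lean document; each statement's English description precedes it below -/
import Mathlib

section
/- Let f:(0,∞)→ℝ be uniformly continuous and convex with f(1)=0, and let λ_n ≥ 0 with λ_n → 1. Then for probability densities q, p (q absolutely continuous w.r.t. p, with q/p integrable against p in the relevant sense), D_{f_{λ_n}}(q‖p) → D_f(q‖p) as n → ∞. -/
open MeasureTheory Set Filter

/-!
If `dist x y ≤ δ → dist (f x) (f y) ≤ ε` on `(0, ∞)` and `f` is convex there, every chord of `f`
over an interval of length at least `δ` has slope at most `2ε/δ` in absolute value (compare it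
with the chords over the two end pieces of length `δ/2`). Hence `|f x - f y| ≤ C|x - y| + ε`,
which gives, pointwise in `z` with `r = q z / p z`,
`|p (f (λ r) - f λ) - p f r| ≤ C |λ - 1| q + (ε + |f λ|) p`.
Integrating against the probability densities `q`, `p`, the distance between the two divergences
is at most `C |λ - 1| + ε + |f λ|`, which tends to `ε` as `λ → 1` since `f` is continuous at `1`
with `f 1 = 0`.
-/

section ConvexModulus

variable {s : Set ℝ} {f : ℝ → ℝ} {δ ε : ℝ}

lemma ConvexOn.abs_slope_le_of_forall_dist_le (hf : ConvexOn ℝ s f) (hδ : 0 < δ)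
    (h : ∀ x ∈ s, ∀ y ∈ s, dist x y ≤ δ → dist (f x) (f y) ≤ ε)
    {x y : ℝ} (hx : x ∈ s) (hy : y ∈ s) (hxy : x + δ < y) :
    |slope f x y| ≤ 2 * ε / δ := by
  have ha : x + δ / 2 ∈ s := hf.1.ordConnected.out hx hy ⟨by linarith, by linarith⟩
  have hb : y - δ / 2 ∈ s := hf.1.ordConnected.out hx hy ⟨by linarith, by linarith⟩
  have hfa : |f (x + δ / 2) - f x| ≤ ε := by
    simpa [Real.dist_eq] using h _ ha _ hx (by simp [abs_of_pos hδ, hδ.le])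
  have hfb : |f y - f (y - δ / 2)| ≤ ε := by
    simpa [Real.dist_eq] using h _ hy _ hb (by simp [abs_of_pos hδ, hδ.le])
  have hlower := hf.secant_mono_aux2 hx hy (by linarith : x < x + δ / 2) (by linarith)
  have hupper := hf.secant_mono_aux3 hx hy (by linarith : x < y - δ / 2) (by linarith)
  rw [add_sub_cancel_left] at hlower
  rw [sub_sub_cancel] at hupper
  have hslope : 2 * ε / δ = ε / (δ / 2) := by field_simp
  rw [slope_def_field, abs_le, hslope]
  constructor
  · calc -(ε / (δ / 2)) = -ε / (δ / 2) := (neg_div _ _).symm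
      _ ≤ (f (x + δ / 2) - f x) / (δ / 2) := by gcongr; linarith [abs_le.mp hfa]
      _ ≤ _ := hlower
  · calc _ ≤ (f y - f (y - δ / 2)) / (δ / 2) := hupper
      _ ≤ ε / (δ / 2) := by gcongr; linarith [abs_le.mp hfb]

lemma ConvexOn.abs_sub_le_of_forall_dist_le (hf : ConvexOn ℝ s f) (hδ : 0 < δ)
    (h : ∀ x ∈ s, ∀ y ∈ s, dist x y ≤ δ → dist (f x) (f y) ≤ ε)
    {x y : ℝ} (hx : x ∈ s) (hy : y ∈ s) :
    |f x - f y| ≤ 2 * ε / δ * |x - y| + ε := by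
  wlog hxy : x ≤ y generalizing x y
  · rw [abs_sub_comm, abs_sub_comm x]
    exact this hy hx (le_of_not_ge hxy)
  have hε : 0 ≤ ε := dist_nonneg.trans (h x hx x hx (by simp [hδ.le]))
  by_cases hclose : y ≤ x + δ
  · have hfxy := h x hx y hy (by rw [Real.dist_eq, abs_sub_comm, abs_of_nonneg] <;> linarith)
    rw [Real.dist_eq] at hfxy
    have : 0 ≤ 2 * ε / δ * |x - y| := by positivity
    linarith
  · have hne : y - x ≠ 0 := by linarith
    have hchord : |f x - f y| = |slope f x y| * |x - y| := by
      rw [slope_def_field, abs_div, abs_sub_comm x y, abs_sub_comm (f x)]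
      field_simp [abs_ne_zero.mpr hne]
    calc |f x - f y| = |slope f x y| * |x - y| := hchord
      _ ≤ 2 * ε / δ * |x - y| := by
        gcongr
        exact hf.abs_slope_le_of_forall_dist_le hδ h hx hy (not_le.mp hclose)
      _ ≤ 2 * ε / δ * |x - y| + ε := le_add_of_nonneg_right hε

end ConvexModulus

section SurrogateIntegrand

variable {g : ℝ → ℝ} {C ε l : ℝ}

lemma abs_apply_mul_sub_apply_le
    (hg : ∀ x ∈ Ioi (0 : ℝ), ∀ y ∈ Ioi 0, |g x - g y| ≤ C * |x - y| + ε)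
    (hl : 0 < l) {r : ℝ} (hr : 0 ≤ r) :
    |g (l * r) - g r| ≤ C * |l - 1| * r + ε := by
  rcases hr.eq_or_lt with rfl | hr
  · simpa using hg 1 (mem_Ioi.2 one_pos) 1 (mem_Ioi.2 one_pos)
  calc |g (l * r) - g r| ≤ C * |l * r - r| + ε := hg _ (mul_pos hl hr) _ hr
    _ = C * |l - 1| * r + ε := by rw [← sub_one_mul, abs_mul, abs_of_pos hr, mul_assoc]

lemma abs_surrogate_integrand_sub_le
    (hg : ∀ x ∈ Ioi (0 : ℝ), ∀ y ∈ Ioi 0, |g x - g y| ≤ C * |x - y| + ε)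
    (hC : 0 ≤ C) (hε : 0 ≤ ε) (hl : 0 < l) {a b : ℝ} (ha : 0 ≤ a) (hb : 0 ≤ b) :
    |b * (g (l * (a / b)) - g l) - b * g (a / b)| ≤ C * |l - 1| * a + (ε + |g l|) * b := by
  rcases hb.eq_or_lt with rfl | hb
  · simp only [zero_mul, sub_zero, abs_zero]
    positivity
  calc |b * (g (l * (a / b)) - g l) - b * g (a / b)|
      = b * |(g (l * (a / b)) - g (a / b)) - g l| := by
        rw [← mul_sub, abs_mul, abs_of_pos hb, sub_right_comm]
    _ ≤ b * (C * |l - 1| * (a / b) + ε + |g l|) := by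
        gcongr
        exact (abs_sub _ _).trans
          (add_le_add_left (abs_apply_mul_sub_apply_le hg hl (div_nonneg ha hb.le)) _)
    _ = C * |l - 1| * a + (ε + |g l|) * b := by field_simp; ring

lemma abs_integral_surrogate_sub_le {α : Type*} [MeasurableSpace α] {μ : Measure α}
    (hg : ∀ x ∈ Ioi (0 : ℝ), ∀ y ∈ Ioi 0, |g x - g y| ≤ C * |x - y| + ε)
    (hC : 0 ≤ C) (hε : 0 ≤ ε) (hl : 0 < l) {q p : α → ℝ} (hq0 : ∀ z, 0 ≤ q z) (hp0 : ∀ z, 0 ≤ p z)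
    (hq : Integrable q μ) (hp : Integrable p μ)
    (hintl : Integrable (fun z => p z * (g (l * (q z / p z)) - g l)) μ)
    (hint : Integrable (fun z => p z * g (q z / p z)) μ) :
    |∫ z, p z * (g (l * (q z / p z)) - g l) ∂μ - ∫ z, p z * g (q z / p z) ∂μ|
      ≤ C * |l - 1| * ∫ z, q z ∂μ + (ε + |g l|) * ∫ z, p z ∂μ := by
  rw [← integral_sub hintl hint, ← integral_const_mul, ← integral_const_mul,
    ← integral_add (hq.const_mul _) (hp.const_mul _)]
  exact abs_integral_le_integral_abs.trans <| integral_mono (hintl.sub hint).abs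
    ((hq.const_mul _).add (hp.const_mul _))
    fun z => abs_surrogate_integrand_sub_le hg hC hε hl (hq0 z) (hp0 z)

end SurrogateIntegrand

theorem surrogate_divergence_tendsto_general {α : Type*} [MeasurableSpace α] (μ : Measure α)
    (f : ℝ → ℝ) (hf : ConvexOn ℝ (Set.Ioi 0) f) (hf1 : f 1 = 0)
    (hfu : UniformContinuousOn f (Set.Ioi 0))
    (lam : ℕ → ℝ) (hlam : Tendsto lam atTop (nhds 1))
    (q p : α → ℝ) (hq0 : ∀ z, 0 ≤ q z) (hp0 : ∀ z, 0 ≤ p z)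
    (hq1 : ∫ z, q z ∂μ = 1) (hp1 : ∫ z, p z ∂μ = 1)
    (hint : Integrable (fun z => p z * f (q z / p z)) μ)
    (hintn : ∀ n, Integrable (fun z => p z * (f (lam n * (q z / p z)) - f (lam n))) μ) :
    Tendsto (fun n => ∫ z, p z * (f (lam n * (q z / p z)) - f (lam n)) ∂μ)
      atTop (nhds (∫ z, p z * f (q z / p z) ∂μ)) := by
  have hq : Integrable q μ := .of_integral_ne_zero (by simp [hq1])
  have hp : Integrable p μ := .of_integral_ne_zero (by simp [hp1])
  have hlam_pos : ∀ᶠ n in atTop, 0 < lam n := hlam.eventually (eventually_gt_nhds one_pos)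
  have hf_lam : Tendsto (fun n => f (lam n)) atTop (nhds 0) :=
    hf1 ▸ ((hfu.continuousOn.continuousAt (Ioi_mem_nhds one_pos)).tendsto.comp hlam)
  rw [Metric.tendsto_nhds]
  intro η hη
  obtain ⟨δ, hδ, hmod⟩ := Metric.uniformContinuousOn_iff_le.mp hfu (η / 2) (half_pos hη)
  have hbound : Tendsto (fun n => 2 * (η / 2) / δ * |lam n - 1| + (η / 2 + |f (lam n)|))
      atTop (nhds (η / 2)) := by
    simpa using ((hlam.sub_const 1).abs.const_mul _).add (hf_lam.abs.const_add (η / 2))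
  filter_upwards [hlam_pos, hbound.eventually (gt_mem_nhds (half_lt_self hη))] with n hn hlt
  rw [Real.dist_eq]
  calc _ ≤ 2 * (η / 2) / δ * |lam n - 1| * ∫ z, q z ∂μ + (η / 2 + |f (lam n)|) * ∫ z, p z ∂μ :=
        abs_integral_surrogate_sub_le
          (fun x hx y hy => hf.abs_sub_le_of_forall_dist_le hδ hmod hx hy)
          (by positivity) (half_pos hη).le hn hq0 hp0 hq hp (hintn n) hint
    _ < η := by rwa [hq1, hp1, mul_one, mul_one]

/-- convergence of the surrogate f-divergence D_{f_{λ_n}}(q‖p) to D_f(q‖p)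
    as λ_n → 1. -/
theorem surrogate_divergence_tendsto {α : Type*} [MeasurableSpace α] (μ : Measure α)
    (f : ℝ → ℝ) (hf : ConvexOn ℝ (Set.Ioi 0) f) (hf1 : f 1 = 0)
    (hfu : UniformContinuousOn f (Set.Ioi 0))
    (lam : ℕ → ℝ) (hlam0 : ∀ n, 0 ≤ lam n) (hlam : Tendsto lam atTop (nhds 1))
    (q p : α → ℝ) (hq0 : ∀ z, 0 ≤ q z) (hp0 : ∀ z, 0 ≤ p z)
    (hq1 : ∫ z, q z ∂μ = 1) (hp1 : ∫ z, p z ∂μ = 1)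
    (hac : ∀ z, p z = 0 → q z = 0)
    (hint : Integrable (fun z => p z * f (q z / p z)) μ)
    (hintn : ∀ n, Integrable (fun z => p z * (f (lam n * (q z / p z)) - f (lam n))) μ) :
    Tendsto (fun n => ∫ z, p z * (f (lam n * (q z / p z)) - f (lam n)) ∂μ)
      atTop (nhds (∫ z, p z * f (q z / p z) ∂μ)) :=
  surrogate_divergence_tendsto_general μ f hf hf1 hfu lam hlam q p hq0 hp0 hq1 hp1 hint hintn
end

section
/- The map g(λ) = ∫ p(z) f(λ·q(z)/p(z)) dz is continuous in λ on (0,∞), when f:(0,∞)→ℝ is uniformly continuous and q, p are probability densities. -/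
/-!
A function uniformly continuous on `(0, ∞)` grows at most linearly, `|f x| ≤ A + B x`. Hence
`|p f(λ q / p)| ≤ A p + B λ q`, an integrable majorant that is uniform for `λ` near any `λ₀ > 0`,
and dominated convergence gives continuity of the integral.
-/

open MeasureTheory Set

/- Walk from `x / (n + 1) ∈ (0, δ)` up to `x`, where `n = ⌊x / δ⌋₊`, in `n` steps of length
`< δ`; each step moves `f` by less than `1`. -/
theorem UniformContinuousOn.exists_norm_le_add_mul_of_Ioi {E : Type*} [SeminormedAddCommGroup E]
    {f : ℝ → E} (hf : UniformContinuousOn f (Ioi 0)) :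
    ∃ A B : ℝ, 0 ≤ B ∧ ∀ x ≥ 0, ‖f x‖ ≤ A + B * x := by
  obtain ⟨δ, hδ, hfδ⟩ := Metric.uniformContinuousOn_iff.mp hf 1 one_pos
  have hchain : ∀ n : ℕ, ∀ y ∈ Ioo 0 δ, dist (f y) (f ((n + 1) * y)) ≤ n := by
    intro n y ⟨hy, hyδ⟩
    have hstep : ∀ k : ℕ, dist (f ((k + 1) * y)) (f (((k + 1 : ℕ) + 1) * y)) ≤ 1 := by
      intro k
      refine (hfδ _ (mem_Ioi.2 (by positivity)) _ (mem_Ioi.2 (by positivity)) ?_).le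
      rw [Real.dist_eq, abs_sub_comm, Nat.cast_add_one, abs_of_pos (by linarith)]
      linarith
    simpa using dist_le_range_sum_of_dist_le (f := fun k : ℕ ↦ f ((k + 1) * y)) (d := fun _ ↦ 1) n
      fun {k} _ ↦ hstep k
  refine ⟨max (‖f δ‖ + 1) ‖f 0‖, 1 / δ, by positivity, fun x hx ↦ ?_⟩
  rcases hx.eq_or_lt with rfl | hx
  · simp
  set n := ⌊x / δ⌋₊
  have hn : x / δ < n + 1 := Nat.lt_floor_add_one _
  have hnx : (n : ℝ) ≤ x / δ := Nat.floor_le (by positivity)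
  set y := x / (n + 1)
  have hy : y ∈ Ioo 0 δ := ⟨by positivity, by
    rw [div_lt_iff₀ (by positivity)]; rwa [div_lt_iff₀ hδ, mul_comm] at hn⟩
  have hxy : (n + 1) * y = x := mul_div_cancel₀ x (by positivity)
  have hy_near : dist (f y) (f δ) < 1 := hfδ _ hy.1 _ hδ (by
    rw [Real.dist_eq, abs_of_neg (by linarith [hy.2])]; linarith [hy.1])
  calc ‖f x‖ ≤ ‖f δ‖ + dist (f x) (f δ) := by
        rw [dist_eq_norm]; exact norm_le_norm_add_norm_sub' _ _
    _ ≤ ‖f δ‖ + (dist (f y) (f x) + dist (f y) (f δ)) := by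
        gcongr; exact dist_triangle_left _ _ _
    _ ≤ ‖f δ‖ + (n + 1) := by
        gcongr
        rw [← hxy]; exact hchain n y hy
    _ ≤ max (‖f δ‖ + 1) ‖f 0‖ + 1 / δ * x := by
        rw [one_div_mul_eq_div]; linarith [le_max_left (‖f δ‖ + 1) ‖f 0‖]

theorem abs_mul_comp_mul_div_le {f : ℝ → ℝ} {A B : ℝ} (hB : 0 ≤ B)
    (hf : ∀ x ≥ 0, |f x| ≤ A + B * x) {p q l : ℝ} (hp : 0 ≤ p) (hq : 0 ≤ q) (hl : 0 ≤ l) :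
    |p * f (l * (q / p))| ≤ A * p + B * l * q := by
  rcases hp.eq_or_lt with rfl | hp
  · simpa using by positivity
  calc |p * f (l * (q / p))| = p * |f (l * (q / p))| := by rw [abs_mul, abs_of_pos hp]
    _ ≤ p * (A + B * (l * (q / p))) := by gcongr; exact hf _ (by positivity)
    _ = A * p + B * l * q := by field_simp

theorem continuousAt_comp_mul_right_of_continuousOn_Ioi {f : ℝ → ℝ}
    (hf : ContinuousOn f (Ioi 0)) {c l : ℝ} (hc : 0 ≤ c) (hl : 0 < l) :
    ContinuousAt (fun t ↦ f (t * c)) l := by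
  rcases hc.eq_or_lt with rfl | hc
  · simpa using continuousAt_const
  exact (hf.continuousAt (Ioi_mem_nhds (mul_pos hl hc))).comp (f := fun t ↦ t * c)
    (continuous_mul_const c).continuousAt

theorem surrogate_integral_continuousOn_general {α : Type*} [MeasurableSpace α] (μ : Measure α)
    (f : ℝ → ℝ) (hfu : UniformContinuousOn f (Set.Ioi 0))
    (q p : α → ℝ) (hq0 : ∀ z, 0 ≤ q z) (hp0 : ∀ z, 0 ≤ p z)
    (hq1 : ∫ z, q z ∂μ = 1) (hp1 : ∫ z, p z ∂μ = 1)
    (hint : ∀ l > (0:ℝ), Integrable (fun z => p z * f (l * (q z / p z))) μ) :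
    ContinuousOn (fun l => ∫ z, p z * f (l * (q z / p z)) ∂μ) (Set.Ioi 0) := by
  obtain ⟨A, B, hB, hAB⟩ := hfu.exists_norm_le_add_mul_of_Ioi
  have hp : Integrable p μ := .of_integral_ne_zero (by simp [hp1])
  have hq : Integrable q μ := .of_integral_ne_zero (by simp [hq1])
  refine isOpen_Ioi.continuousOn_iff.mpr fun l₀ hl₀ ↦ ?_
  apply continuousAt_of_dominated (bound := fun z ↦ A * p z + B * (l₀ + 1) * q z)
  · filter_upwards [Ioi_mem_nhds hl₀] with l hl using (hint l hl).aestronglyMeasurable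
  · filter_upwards [Ioo_mem_nhds hl₀ (lt_add_one l₀)] with l ⟨hl, hl₁⟩
    refine .of_forall fun z ↦ ?_
    calc ‖p z * f (l * (q z / p z))‖ ≤ A * p z + B * l * q z :=
          abs_mul_comp_mul_div_le hB hAB (hp0 z) (hq0 z) hl.le
      _ ≤ A * p z + B * (l₀ + 1) * q z := by gcongr; exact hq0 z
  · exact (hp.const_mul A).add (hq.const_mul _)
  · exact .of_forall fun z ↦ continuousAt_const.mul
      (continuousAt_comp_mul_right_of_continuousOn_Ioi hfu.continuousOn
        (div_nonneg (hq0 z) (hp0 z)) hl₀)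

/-- continuity in λ of g(λ) = ∫ p f(λ q/p). -/
theorem surrogate_integral_continuousOn {α : Type*} [MeasurableSpace α] (μ : Measure α)
    (f : ℝ → ℝ) (hfu : UniformContinuousOn f (Set.Ioi 0))
    (q p : α → ℝ) (hq0 : ∀ z, 0 ≤ q z) (hp0 : ∀ z, 0 ≤ p z)
    (hq1 : ∫ z, q z ∂μ = 1) (hp1 : ∫ z, p z ∂μ = 1)
    (hac : ∀ z, p z = 0 → q z = 0)
    (hint : ∀ l > (0:ℝ), Integrable (fun z => p z * f (l * (q z / p z))) μ) :
    ContinuousOn (fun l => ∫ z, p z * f (l * (q z / p z)) ∂μ) (Set.Ioi 0) :=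
  surrogate_integral_continuousOn_general μ f hfu q p hq0 hp0 hq1 hp1 hint
end

section
/- If f is convex with f(1)=0 and satisfies f(ts) = t^γ f(s) + f(t)·s for all t,s > 0 (type 1 shifted homogeneity), then for any λ > 0 and probability densities q, p, the surrogate divergence satisfies D_{f_λ}(q‖p) = λ^γ · D_f(q‖p). -/
/-!
Shifted homogeneity with `t = λ`, `s = q/p` rewrites the surrogate integrand
`p (f (λ q/p) - f λ)` as `λ^γ p f (q/p) + f λ (q - p)`, and the last term integrates to zero
because `q` and `p` have the same mass.
-/

open MeasureTheory

def ShiftedHomogeneousType1 (f : ℝ → ℝ) (γ : ℝ) : Prop :=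
  ∀ t s : ℝ, 0 < t → 0 < s → f (t * s) = t ^ γ * f s + f t * s

theorem ShiftedHomogeneousType1.surrogate_integrand_eq {f : ℝ → ℝ} {γ : ℝ}
    (hhom : ShiftedHomogeneousType1 f γ) {lam : ℝ} (hlam : 0 < lam) {q p : ℝ}
    (hq : 0 ≤ q) (hp : 0 ≤ p) (hpq : p = 0 ↔ q = 0) :
    p * (f (lam * (q / p)) - f lam) = lam ^ γ * (p * f (q / p)) + f lam * (q - p) := by
  rcases hp.eq_or_lt with hp0 | hp_pos
  · simp [← hp0, hpq.mp hp0.symm]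
  · have hq_pos : 0 < q := hq.lt_of_ne' fun hq0 => hp_pos.ne' (hpq.mpr hq0)
    rw [hhom lam _ hlam (div_pos hq_pos hp_pos)]
    field_simp
    ring

theorem surrogate_eq_scaled_type1_general {α : Type*} [MeasurableSpace α] (μ : Measure α)
    (f : ℝ → ℝ) (γ : ℝ)
    (hhom : ∀ t s : ℝ, 0 < t → 0 < s → f (t * s) = t ^ γ * f s + f t * s)
    (lam : ℝ) (hlam : 0 < lam)
    (q p : α → ℝ) (hq0 : ∀ z, 0 ≤ q z) (hp0 : ∀ z, 0 ≤ p z)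
    (hqi : Integrable q μ) (hpi : Integrable p μ)
    (hq1 : ∫ z, q z ∂μ = 1) (hp1 : ∫ z, p z ∂μ = 1)
    (hac : ∀ z, p z = 0 ↔ q z = 0)
    (hint : Integrable (fun z => p z * f (q z / p z)) μ) :
    ∫ z, p z * (f (lam * (q z / p z)) - f lam) ∂μ
      = lam ^ γ * ∫ z, p z * f (q z / p z) ∂μ := by
  have hsplit : ∀ z, p z * (f (lam * (q z / p z)) - f lam)
      = lam ^ γ * (p z * f (q z / p z)) + f lam * (q z - p z) := fun z =>
    ShiftedHomogeneousType1.surrogate_integrand_eq hhom hlam (hq0 z) (hp0 z) (hac z)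
  have hmass_int : Integrable (fun z => f lam * (q z - p z)) μ := (hqi.sub hpi).const_mul _
  have hmass : ∫ z, f lam * (q z - p z) ∂μ = 0 := by
    rw [integral_const_mul, integral_sub hqi hpi, hq1, hp1, sub_self, mul_zero]
  simp_rw [hsplit]
  rw [integral_add (hint.const_mul _) hmass_int, hmass, add_zero, integral_const_mul]

/-- for a type-1 shifted homogeneous f, D_{f_λ}(q‖p) = λ^γ D_f(q‖p). -/
theorem surrogate_eq_scaled_type1 {α : Type*} [MeasurableSpace α] (μ : Measure α)
    (f : ℝ → ℝ) (γ : ℝ) (hf : ConvexOn ℝ (Set.Ioi 0) f) (hf1 : f 1 = 0)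
    (hhom : ∀ t s : ℝ, 0 < t → 0 < s → f (t * s) = t ^ γ * f s + f t * s)
    (lam : ℝ) (hlam : 0 < lam)
    (q p : α → ℝ) (hq0 : ∀ z, 0 ≤ q z) (hp0 : ∀ z, 0 ≤ p z)
    (hqi : Integrable q μ) (hpi : Integrable p μ)
    (hq1 : ∫ z, q z ∂μ = 1) (hp1 : ∫ z, p z ∂μ = 1)
    (hac : ∀ z, p z = 0 ↔ q z = 0)
    (hint : Integrable (fun z => p z * f (q z / p z)) μ) :
    ∫ z, p z * (f (lam * (q z / p z)) - f lam) ∂μ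
      = lam ^ γ * ∫ z, p z * f (q z / p z) ∂μ :=
  surrogate_eq_scaled_type1_general μ f γ hhom lam hlam q p hq0 hp0 hqi hpi hq1 hp1 hac hint
end
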